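/- Let A be the two-dimensional algebra with basis {1, x} and relation x² = 1/(s+1), and C the two-dimensional coalgebra with basis {e, f}, Δ(e) = e⊗e + (1/(s+1)) f⊗f, Δ(f) = e⊗f + f⊗e, ε(e)=1, ε(f)=0. The linear map ψ: C⊗A → A⊗C given by ψ(e⊗1)=1⊗e, ψ(f⊗1)=1⊗f, ψ(e⊗x) = q·1⊗f + x⊗e, ψ(f⊗x) = −x⊗f is an entwining map, for any q ∈ k. -/

import Mathlib

open TensorProduct LinearMap


/-- `ψ : C ⊗ A → A ⊗ C` is an entwining map, i.e. `(A, C)_ψ` is an entwining structure: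
(1) `ψ∘(id_C⊗μ) = (μ⊗id_C)∘(id_A⊗ψ)∘(ψ⊗id_A)`;
(2) `(id_A⊗Δ)∘ψ = (ψ⊗id_C)∘(id_C⊗ψ)∘(Δ⊗id_A)`;
(3) `ψ(c⊗1) = 1⊗c`; (4) `(id_A⊗ε)∘ψ = ε⊗id_A`. -/
def IsEntwining (k : Type*) {A C : Type*} [Field k] [Ring A] [Algebra k A]
    [AddCommGroup C] [Module k C] [Coalgebra k C]
    (ψ : C ⊗[k] A →ₗ[k] A ⊗[k] C) : Prop :=
  (∀ (c : C) (a b : A),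
    ψ (c ⊗ₜ[k] (a * b)) =
      (LinearMap.mul' k A).rTensor C
        ((TensorProduct.assoc k A A C).symm
          (ψ.lTensor A ((TensorProduct.assoc k A C A)
            (ψ.rTensor A ((c ⊗ₜ[k] a) ⊗ₜ[k] b)))))) ∧
  (∀ (c : C) (a : A),
    (Coalgebra.comul (R := k) (A := C)).lTensor A (ψ (c ⊗ₜ[k] a)) =
      (TensorProduct.assoc k A C C)
        (ψ.rTensor C ((TensorProduct.assoc k C A C).symm
          (ψ.lTensor C ((TensorProduct.assoc k C C A)
            ((Coalgebra.comul (R := k) (A := C)).rTensor A (c ⊗ₜ[k] a))))))) ∧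
  (∀ c : C, ψ (c ⊗ₜ[k] (1 : A)) = (1 : A) ⊗ₜ[k] c) ∧
  (∀ (c : C) (a : A),
    (Coalgebra.counit (R := k) (A := C)).lTensor A (ψ (c ⊗ₜ[k] a)) =
      a ⊗ₜ[k] Coalgebra.counit (R := k) c)

set_option maxHeartbeats 2000000 in
/-- Let `A = k[x]/(x² − 1/(s+1))` (the two-dimensional algebra with basis
`{1, x}` and relation `x² = 1/(s+1)`) and let `C` be the two-dimensional coalgebra with
basis `{e, f}`, `Δ(e) = e⊗e + (1/(s+1)) f⊗f`, `Δ(f) = e⊗f + f⊗e`, `ε(e)=1`, `ε(f)=0`.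
For any `q ∈ k`, the linear map `ψ : C⊗A → A⊗C` given by `ψ(e⊗1)=1⊗e`, `ψ(f⊗1)=1⊗f`,
`ψ(e⊗x) = q·1⊗f + x⊗e`, `ψ(f⊗x) = −x⊗f` is an entwining map. -/
theorem stmt13 (k A C : Type*) [Field k] [Ring A] [Algebra k A]
    [AddCommGroup C] [Module k C] [Coalgebra k C]
    (s q : k) (hs : s + 1 ≠ 0)
    -- A has basis {1, x} and relation x² = 1/(s+1)
    (x : A)
    (hxbasis : LinearIndependent k ![(1 : A), x])
    (hxspan : Submodule.span k {(1 : A), x} = ⊤)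
    (hxsq : x * x = (s + 1)⁻¹ • (1 : A))
    -- C has basis {e, f} with the given coalgebra structure
    (e f : C)
    (hefbasis : LinearIndependent k ![e, f])
    (hefspan : Submodule.span k {e, f} = ⊤)
    (hΔe : Coalgebra.comul (R := k) e = e ⊗ₜ[k] e + (s + 1)⁻¹ • (f ⊗ₜ[k] f))
    (hΔf : Coalgebra.comul (R := k) f = e ⊗ₜ[k] f + f ⊗ₜ[k] e)
    (hεe : Coalgebra.counit (R := k) e = 1)
    (hεf : Coalgebra.counit (R := k) f = 0)
    -- the map ψ
    (ψ : C ⊗[k] A →ₗ[k] A ⊗[k] C)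
    (hψe1 : ψ (e ⊗ₜ[k] (1 : A)) = (1 : A) ⊗ₜ[k] e)
    (hψf1 : ψ (f ⊗ₜ[k] (1 : A)) = (1 : A) ⊗ₜ[k] f)
    (hψex : ψ (e ⊗ₜ[k] x) = q • ((1 : A) ⊗ₜ[k] f) + x ⊗ₜ[k] e)
    (hψfx : ψ (f ⊗ₜ[k] x) = -(x ⊗ₜ[k] f)) :
    IsEntwining k ψ := by
  classical
  have hmemC : ∀ c : C, c ∈ Submodule.span k ({e, f} : Set C) := by
    intro c; rw [hefspan]; trivial
  have hmemA : ∀ a : A, a ∈ Submodule.span k ({(1 : A), x} : Set A) := by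
    intro a; rw [hxspan]; trivial
  have hψfx' : ψ (f ⊗ₜ[k] x) = (-1 : k) • (x ⊗ₜ[k] f) := by
    rw [hψfx]; exact (neg_one_smul k _).symm
  refine ⟨?_, ?_, ?_, ?_⟩
  · -- condition 1
    intro c a b
    refine Submodule.span_induction ?_ ?_ ?_ ?_ (hmemC c)
    · intro c hc
      refine Submodule.span_induction ?_ ?_ ?_ ?_ (hmemA a)
      · intro a ha
        refine Submodule.span_induction ?_ ?_ ?_ ?_ (hmemA b)
        · intro b hb
          rcases hc with rfl | rfl <;> rcases ha with rfl | rfl <;>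
            rcases hb with rfl | rfl <;>
            (try simp only [one_mul, mul_one, hxsq, tmul_smul, ← smul_tmul', map_smul, map_add,
              map_neg, neg_tmul, tmul_neg, add_tmul, tmul_add, tmul_zero, zero_tmul, smul_zero, hψe1, hψf1, hψex, hψfx',
              LinearMap.rTensor_tmul, LinearMap.lTensor_tmul, TensorProduct.assoc_tmul,
              TensorProduct.assoc_symm_tmul, LinearMap.mul'_apply]) <;> (try module)
        · simp
        · intro b₁ b₂ _ _ h1 h2
          simp only [mul_add, tmul_add, add_tmul, map_add, h1, h2]
        · intro r b₁ _ h1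
          simp only [mul_smul_comm, tmul_smul, ← smul_tmul', map_smul, h1]
      · simp
      · intro a₁ a₂ _ _ h1 h2
        simp only [add_mul, tmul_add, add_tmul, map_add, h1, h2]
      · intro r a₁ _ h1
        simp only [smul_mul_assoc, tmul_smul, ← smul_tmul', map_smul, h1]
    · simp
    · intro c₁ c₂ _ _ h1 h2
      simp only [add_tmul, map_add, h1, h2]
    · intro r c₁ _ h1
      simp only [← smul_tmul', map_smul, h1]
  · -- condition 2
    intro c a
    refine Submodule.span_induction ?_ ?_ ?_ ?_ (hmemC c)
    · intro c hc
      refine Submodule.span_induction ?_ ?_ ?_ ?_ (hmemA a)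
      · intro a ha
        rcases hc with rfl | rfl <;> rcases ha with rfl | rfl <;>
          (try simp only [hΔe, hΔf, tmul_smul, ← smul_tmul', map_smul, map_add,
            map_neg, neg_tmul, tmul_neg, add_tmul, tmul_add, tmul_zero, zero_tmul, smul_zero, hψe1, hψf1, hψex, hψfx',
            LinearMap.rTensor_tmul, LinearMap.lTensor_tmul, TensorProduct.assoc_tmul,
            TensorProduct.assoc_symm_tmul]) <;> (try module)
      · simp
      · intro a₁ a₂ _ _ h1 h2
        simp only [tmul_add, add_tmul, map_add, h1, h2]
      · intro r a₁ _ h1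
        simp only [tmul_smul, ← smul_tmul', map_smul, h1]
    · simp
    · intro c₁ c₂ _ _ h1 h2
      simp only [add_tmul, map_add, h1, h2]
    · intro r c₁ _ h1
      simp only [← smul_tmul', map_smul, h1]
  · -- condition 3
    intro c
    refine Submodule.span_induction ?_ ?_ ?_ ?_ (hmemC c)
    · intro c hc
      rcases hc with rfl | rfl
      · exact hψe1
      · exact hψf1
    · simp
    · intro c₁ c₂ _ _ h1 h2
      simp only [add_tmul, tmul_add, map_add, h1, h2]
    · intro r c₁ _ h1
      simp only [← smul_tmul', tmul_smul, map_smul, h1]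
  · -- condition 4
    intro c a
    refine Submodule.span_induction ?_ ?_ ?_ ?_ (hmemC c)
    · intro c hc
      refine Submodule.span_induction ?_ ?_ ?_ ?_ (hmemA a)
      · intro a ha
        rcases hc with rfl | rfl <;> rcases ha with rfl | rfl <;>
          (try simp only [hεe, hεf, tmul_smul, ← smul_tmul', map_smul, map_add,
            map_neg, neg_tmul, tmul_neg, add_tmul, tmul_add, tmul_zero, zero_tmul, smul_zero, hψe1, hψf1, hψex, hψfx,
            LinearMap.lTensor_tmul]) <;> (try module)
      · simp
      · intro a₁ a₂ _ _ h1 h2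
        simp only [tmul_add, add_tmul, map_add, h1, h2]
      · intro r a₁ _ h1
        simp only [tmul_smul, ← smul_tmul', map_smul, h1]
    · simp
    · intro c₁ c₂ _ _ h1 h2
      simp only [add_tmul, map_add, h1, h2, map_add, tmul_add]
    · intro r c₁ _ h1
      simp only [← smul_tmul', map_smul, h1, tmul_smul]
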